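/- arXiv:1506.07758 — 4 statements merged into one kernel-verified Lean document; each statement's English description precedes it below -/
import Mathlib

section
/- Let M ≥ 2 be an integer and 0 < p ≤ 1. If a1, ..., aM are positive reals satisfying a_i^{p-1} · Σ_{j ≠ i} a_j^{p+1} = 1 for every i = 1, ..., M, then a_1 = a_2 = ... = a_M = (M-1)^{-1/(2p)}. -/
/-!
Write `S = ∑ j, a j ^ (p + 1)`, so that the `i`-th equation reads `φ (a i) = 1` with
`φ x = x ^ (p - 1) * (S - x ^ (p + 1))`. For `p ≤ 1` the first factor is antitone and the second
strictly antitone, so `φ` is strictly antitone where it is positive and all `a i` coincide.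
For a common value `t` the equation becomes `(M - 1) * t ^ (2 * p) = 1`.
-/

open Finset

lemma strictAntiOn_mul_sub {α : Type*} [Preorder α] {g h : α → ℝ} {s : Set α}
    (hg : AntitoneOn g s) (hg_pos : ∀ x ∈ s, 0 < g x) (hh : StrictMonoOn h s) (S : ℝ) :
    StrictAntiOn (fun x ↦ g x * (S - h x)) {x ∈ s | 0 < g x * (S - h x)} := by
  rintro x ⟨hx, -⟩ y ⟨hy, hy_pos⟩ hxy
  have hy_sub : 0 < S - h y := pos_of_mul_pos_right hy_pos (hg_pos y hy).le
  exact mul_lt_mul' (hg hx hy hxy.le) (by linarith [hh hx hy hxy]) hy_sub.le (hg_pos x hx)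

lemma eq_rpow_neg_inv_of_mul_rpow_eq_one {n t q : ℝ} (ht : 0 < t) (hq : q ≠ 0)
    (h : n * t ^ q = 1) : t = n ^ (-(1 / q)) := by
  have hn : n = t ^ (-q) := by
    rw [Real.rpow_neg ht.le]
    exact eq_inv_of_mul_eq_one_left h
  rw [hn, ← Real.rpow_mul ht.le]
  field_simp
  simp

theorem symmetric_system_unique_general (M : ℕ) (p : ℝ) (hp : 0 < p) (hp1 : p ≤ 1)
    (a : Fin M → ℝ) (ha : ∀ i, 0 < a i)
    (heq : ∀ i, a i ^ (p - 1) * ∑ j ∈ univ \ {i}, a j ^ (p + 1) = 1) :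
    ∀ i, a i = ((M : ℝ) - 1) ^ (-(1 / (2 * p))) := by
  set S := ∑ j, a j ^ (p + 1)
  have hsum : ∀ i, ∑ j ∈ univ \ {i}, a j ^ (p + 1) = S - a i ^ (p + 1) := fun i ↦ by
    rw [sum_sdiff_eq_sub (subset_univ _), sum_singleton]
  have hφ := strictAntiOn_mul_sub
    (Real.antitoneOn_rpow_Ioi_of_exponent_nonpos (r := p - 1) (by linarith))
    (fun x hx ↦ Real.rpow_pos_of_pos hx (p - 1))
    ((Real.strictMonoOn_rpow_Ici_of_exponent_pos (r := p + 1) (by linarith)).mono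
      Set.Ioi_subset_Ici_self) S
  have hmem : ∀ i, a i ∈ {x ∈ Set.Ioi 0 | 0 < x ^ (p - 1) * (S - x ^ (p + 1))} := fun i ↦
    ⟨ha i, by rw [← hsum, heq]; exact one_pos⟩
  have hall : ∀ i j, a j = a i := fun i j ↦
    hφ.injOn (hmem j) (hmem i) (by simp only [← hsum, heq])
  intro i
  have hS : S = M * a i ^ (p + 1) := by
    simp only [S, hall i, sum_const, card_univ, Fintype.card_fin, nsmul_eq_mul]
  refine eq_rpow_neg_inv_of_mul_rpow_eq_one (ha i) (by positivity) ?_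
  calc ((M : ℝ) - 1) * a i ^ (2 * p)
      = a i ^ (p - 1) * (S - a i ^ (p + 1)) := by
        rw [hS, show 2 * p = (p - 1) + (p + 1) by ring, Real.rpow_add (ha i)]; ring
    _ = 1 := by rw [← hsum, heq]

open Finset in
theorem symmetric_system_unique (M : ℕ) (hM : 2 ≤ M) (p : ℝ) (hp : 0 < p) (hp1 : p ≤ 1)
    (a : Fin M → ℝ) (ha : ∀ i, 0 < a i)
    (heq : ∀ i, a i ^ (p - 1) * ∑ j ∈ univ \ {i}, a j ^ (p + 1) = 1) :
    ∀ i, a i = ((M : ℝ) - 1) ^ (-(1 / (2 * p))) :=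
  symmetric_system_unique_general M p hp hp1 a ha heq
end

section
/- Let 0 < a ≤ b ≤ c with a + b ≤ c. Then the linear system a·y + b·z = 1, a·x + c·z = 1, b·x + c·y = 1 has no solution with x, y, z all strictly positive. -/
theorem no_positive_solution (a b c : ℝ) (ha : 0 < a) (hab : a ≤ b) (hbc : b ≤ c)
    (h : a + b ≤ c) :
    ¬ ∃ x y z : ℝ, 0 < x ∧ 0 < y ∧ 0 < z ∧
      a * y + b * z = 1 ∧ a * x + c * z = 1 ∧ b * x + c * y = 1 := by
  rintro ⟨x, y, z, hx, hy, hz, e1, e2, e3⟩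
  have hc : 0 < c := lt_of_lt_of_le ha (hab.trans hbc)
  have hyz : y ≤ z := by
    by_contra hlt
    push_neg at hlt
    nlinarith [mul_nonneg hx.le (sub_nonneg.mpr hab), mul_pos hc (sub_pos.mpr hlt)]
  nlinarith [mul_pos hx ha, mul_nonneg (sub_nonneg.mpr hyz) (sub_nonneg.mpr h), mul_nonneg hz.le (sub_nonneg.mpr h)]
end

section
/- Fix p ≥ 1 and an integer M ≥ 2. Define, for r = (r_1, ..., r_{M-1}) ∈ [0,1]^{M-1} with Σ r_i^{p+1} > 0, g(r) = ((1 + Σ_i r_i^2)^{p+1} − 1 − Σ_i r_i^{2p+2}) / (2Σ_i r_i^{p+1} + Σ_{i,j} r_i^{p+1} r_j^{p+1}). Then there exists m > 0 such that g(r) ≥ m for all such r. -/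
theorem mandel_lower_bound (p : ℝ) (hp : 1 ≤ p) (M : ℕ) (hM : 2 ≤ M) :
    ∃ m : ℝ, 0 < m ∧ ∀ r : Fin (M - 1) → ℝ, (∀ i, r i ∈ Set.Icc (0 : ℝ) 1) →
      0 < ∑ i, r i ^ (p + 1) →
      m ≤ ((1 + ∑ i, r i ^ 2) ^ (p + 1) - 1 - ∑ i, r i ^ (2 * p + 2)) /
        (2 * ∑ i, r i ^ (p + 1) + (∑ i, r i ^ (p + 1)) ^ 2) := by
  have hM1 : (0:ℝ) < (M:ℝ) + 1 := by positivity
  refine ⟨p / ((M:ℝ) + 1), by positivity, ?_⟩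
  intro r hr hSpos
  set S := ∑ i, r i ^ (p + 1) with hSdef
  set Q := ∑ i, r i ^ 2 with hQdef
  set T := ∑ i, r i ^ (2 * p + 2) with hTdef
  have key : ∀ (q : ℝ), 2 ≤ q → ∀ i, r i ^ q ≤ r i ^ (2:ℕ) := by
    intro q hq i
    obtain ⟨h0, h1⟩ := hr i
    rcases eq_or_lt_of_le h0 with h | h
    · rw [← h, Real.zero_rpow (by linarith)]
      simp
    · calc r i ^ q ≤ r i ^ (2:ℝ) :=
            Real.rpow_le_rpow_of_exponent_ge h h1 hq
        _ = r i ^ (2:ℕ) := by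
            rw [← Real.rpow_natCast (r i) 2]; norm_num
  have hQS : S ≤ Q := Finset.sum_le_sum fun i _ => key (p+1) (by linarith) i
  have hTQ : T ≤ Q := Finset.sum_le_sum fun i _ => key (2*p+2) (by linarith) i
  have hle1 : ∀ i, r i ^ (p + 1) ≤ 1 := fun i =>
    Real.rpow_le_one (hr i).1 (hr i).2 (by linarith)
  have hSM : S ≤ (M:ℝ) - 1 := by
    calc S ≤ ∑ _i : Fin (M-1), (1:ℝ) :=
          Finset.sum_le_sum fun i _ => hle1 i
      _ = ((M - 1 : ℕ) : ℝ) := by simp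
      _ ≤ (M:ℝ) - 1 := by
          have : (1:ℕ) ≤ M := by omega
          push_cast [Nat.cast_sub this]
          linarith
  have hQ0 : 0 ≤ Q := Finset.sum_nonneg fun i _ => by positivity
  have hBern : 1 + (p + 1) * Q ≤ (1 + Q) ^ (p + 1) :=
    one_add_mul_self_le_rpow_one_add (by linarith) (by linarith)
  have hNum : p * S ≤ (1 + Q) ^ (p + 1) - 1 - T := by nlinarith
  have hDen : 0 < 2 * S + S ^ 2 := by nlinarith
  rw [div_le_div_iff₀ hM1 hDen]
  nlinarith [mul_le_mul_of_nonneg_left hSM (le_of_lt hSpos),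
    mul_le_mul_of_nonneg_left hNum (le_of_lt hM1),
    mul_nonneg (by linarith : (0:ℝ) ≤ p) (le_of_lt hSpos)]
end

section
/- Let a_1, ..., a_M be positive reals, 0 < p ≤ 1, and suppose a_i^{p-1} Σ_{j≠i} a_j^{p+1} = 1 for all i. If a_1 < a_2 and a_1 ≤ a_i for all i, then Σ_{j≠1} a_j^{p+1} > Σ_{j≠2} a_j^{p+1} while a_1^{1-p} ≤ a_2^{1-p}, a contradiction; hence no solution with two distinct values exists. -/
/-!
Every equation `a i ^ (p - 1) * ∑ j ≠ i, a j ^ (p + 1) = 1` says `S = a i ^ (p + 1) + a i ^ (1 - p)`,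
where `S = ∑ j, a j ^ (p + 1)` does not depend on `i`. For `-1 < p ≤ 1` the right-hand side is a
strictly increasing function of `a i`, so all the `a i` are equal.
-/

namespace Real

lemma eq_rpow_one_sub_of_rpow_sub_one_mul_eq_one {x s p : ℝ} (hx : 0 < x)
    (h : x ^ (p - 1) * s = 1) : s = x ^ (1 - p) := by
  rw [← neg_sub, rpow_neg hx.le]
  exact eq_inv_of_mul_eq_one_right h

lemma rpow_add_one_add_rpow_one_sub_lt {p x y : ℝ} (hp : -1 < p) (hp1 : p ≤ 1)
    (hx : 0 ≤ x) (hxy : x < y) : x ^ (p + 1) + x ^ (1 - p) < y ^ (p + 1) + y ^ (1 - p) :=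
  add_lt_add_of_lt_of_le (rpow_lt_rpow hx hxy (by linarith))
    (rpow_le_rpow hx hxy.le (by linarith))

end Real

open Finset in
theorem no_two_distinct_values_general (M : ℕ) (p : ℝ) (hp : 0 < p) (hp1 : p ≤ 1)
    (a : Fin M → ℝ) (ha : ∀ i, 0 < a i)
    (heq : ∀ i, a i ^ (p - 1) * ∑ j ∈ univ \ {i}, a j ^ (p + 1) = 1)
    (i₁ i₂ : Fin M) (hlt : a i₁ < a i₂) : False := by
  have htotal : ∀ i, ∑ j, a j ^ (p + 1) = a i ^ (p + 1) + a i ^ (1 - p) := fun i => by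
    rw [sum_eq_add_sum_sdiff_singleton_of_mem (mem_univ i),
      Real.eq_rpow_one_sub_of_rpow_sub_one_mul_eq_one (ha i) (heq i)]
  have hmono := Real.rpow_add_one_add_rpow_one_sub_lt (by linarith) hp1 (ha i₁).le hlt
  rw [← htotal, ← htotal] at hmono
  exact lt_irrefl _ hmono

open Finset in
theorem no_two_distinct_values (M : ℕ) (p : ℝ) (hp : 0 < p) (hp1 : p ≤ 1)
    (a : Fin M → ℝ) (ha : ∀ i, 0 < a i)
    (heq : ∀ i, a i ^ (p - 1) * ∑ j ∈ univ \ {i}, a j ^ (p + 1) = 1)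
    (i₁ i₂ : Fin M) (hlt : a i₁ < a i₂) (hmin : ∀ i, a i₁ ≤ a i) : False :=
  no_two_distinct_values_general M p hp hp1 a ha heq i₁ i₂ hlt
end
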